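/- arXiv:1608.04319 — 4 statements merged into one kernel-verified Lean document; each statement's English description precedes it below -/
import Mathlib

section
/- Let G be a finite simple graph with n ≥ 2 vertices and m edges. Then, as real numbers, NK(G^{--}) ≤ (n-2)^m · ((n+m-1) - 4m/n)^n, with equality if and only if G is regular. -/
open Finset

variable {V : Type*}

/-- The Narumi–Katayama index: the product of the degrees of all vertices. -/
def NK {W : Type*} [Fintype W] (H : SimpleGraph W) [DecidableRel H.Adj] : ℕ :=
  ∏ v, H.degree v

/-- The first Zagreb index: the sum of the squares of the degrees. -/
def M1 [Fintype V] (G : SimpleGraph V) [DecidableRel G.Adj] : ℕ :=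
  ∑ v, (G.degree v) ^ 2

/-- The multiplicative sum Zagreb index: the product over the edges of `G` of the
sum of the degrees of the two endpoints. -/
def Pi1Star [Fintype V] [DecidableEq V] (G : SimpleGraph V) [DecidableRel G.Adj] : ℕ :=
  ∏ e ∈ G.edgeFinset,
    Sym2.lift ⟨fun u v => G.degree u + G.degree v, fun u v => by simp [Nat.add_comm]⟩ e

/-- A generic transformation graph on the vertex set `V(G) ∪ E(G)`, built from a
symmetric irreflexive relation `Rvv` between vertices, a symmetric irreflexive relation
`Ree` between edges, and an incidence relation `Rve` between vertices and edges. -/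
def transGraph (G : SimpleGraph V) (Rvv : V → V → Prop) (Ree : Sym2 V → Sym2 V → Prop)
    (Rve : V → Sym2 V → Prop)
    (hvv : Symmetric Rvv) (hvv' : Irreflexive Rvv)
    (hee : Symmetric Ree) (hee' : Irreflexive Ree) :
    SimpleGraph (V ⊕ G.edgeSet) where
  Adj a b :=
    match a, b with
    | Sum.inl u, Sum.inl v => Rvv u v
    | Sum.inr e, Sum.inr f => Ree e.1 f.1
    | Sum.inl u, Sum.inr e => Rve u e.1
    | Sum.inr e, Sum.inl u => Rve u e.1
  symm := by
    constructor
    rintro (u | e) (v | f) h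
    · exact hvv h
    · exact h
    · exact h
    · exact hee h
  loopless := by
    constructor
    rintro (u | e) h
    · exact hvv' u h
    · exact hee' e.1 h

instance transGraph.instDecidableAdj (G : SimpleGraph V) (Rvv : V → V → Prop)
    (Ree : Sym2 V → Sym2 V → Prop) (Rve : V → Sym2 V → Prop)
    (h1 : Symmetric Rvv) (h2 : Irreflexive Rvv) (h3 : Symmetric Ree) (h4 : Irreflexive Ree)
    [DecidableRel Rvv] [DecidableRel Ree] [∀ u e, Decidable (Rve u e)] :
    DecidableRel (transGraph G Rvv Ree Rve h1 h2 h3 h4).Adj := fun a b =>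
  match a, b with
  | Sum.inl u, Sum.inl v => inferInstanceAs (Decidable (Rvv u v))
  | Sum.inr e, Sum.inr f => inferInstanceAs (Decidable (Ree e.1 f.1))
  | Sum.inl u, Sum.inr e => inferInstanceAs (Decidable (Rve u e.1))
  | Sum.inr e, Sum.inl u => inferInstanceAs (Decidable (Rve u e.1))

/-- Two edges (as elements of `Sym2 V`) are adjacent: distinct and sharing an endpoint. -/
abbrev shareRel : Sym2 V → Sym2 V → Prop := fun e f => e ≠ f ∧ ∃ w, w ∈ e ∧ w ∈ f

lemma shareRel_symm : Symmetric (shareRel (V := V)) :=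
  fun _ _ h => ⟨h.1.symm, h.2.imp fun _ hw => ⟨hw.2, hw.1⟩⟩

lemma shareRel_irrefl : Irreflexive (shareRel (V := V)) := fun _ h => h.1 rfl

/-- Two edges are "non-adjacent": distinct and sharing no endpoint. -/
abbrev coshareRel : Sym2 V → Sym2 V → Prop := fun e f => e ≠ f ∧ ∀ w, w ∈ e → w ∉ f

lemma coshareRel_symm : Symmetric (coshareRel (V := V)) :=
  fun _ _ h => ⟨h.1.symm, fun w hf he => h.2 w he hf⟩

lemma coshareRel_irrefl : Irreflexive (coshareRel (V := V)) := fun _ h => h.1 rfl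

/-- Non-adjacency of distinct vertices. -/
abbrev coAdj (G : SimpleGraph V) : V → V → Prop := fun u v => u ≠ v ∧ ¬ G.Adj u v

lemma coAdj_symm (G : SimpleGraph V) : Symmetric (coAdj G) :=
  fun _ _ h => ⟨h.1.symm, fun ha => h.2 ha.symm⟩

lemma coAdj_irrefl (G : SimpleGraph V) : Irreflexive (coAdj G) := fun _ h => h.1 rfl

variable [Fintype V] [DecidableEq V]

/-- The transformation graph `G^{--}`. -/
abbrev Gmm (G : SimpleGraph V) [DecidableRel G.Adj] : SimpleGraph (V ⊕ G.edgeSet) :=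
  transGraph G (coAdj G) (fun _ _ => False) (fun u e => u ∉ e)
    (coAdj_symm G) (coAdj_irrefl G) (fun _ _ h => h.elim) (fun _ h => h)

instance Gmm.instDecidableAdj (G : SimpleGraph V) [DecidableRel G.Adj] : DecidableRel (Gmm G).Adj :=
  transGraph.instDecidableAdj _ _ _ _ _ _ _ _

/-! In `G^{--}` an edge of `G` has degree `n - 2` and a vertex `v` has degree
`(n - 1 - d v) + (m - d v) = n + m - 1 - 2 d v`; by the handshake lemma these vertex degrees sum
to `n (n + m - 1) - 4 m`. The bound is therefore AM-GM for the vertex degrees, times `(n - 2) ^ m`.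
Equality holds iff the vertex degrees of `G^{--}` are all equal, i.e. `G` is regular, or
`(n - 2) ^ m = 0`; the latter forces `n = 2`, and a graph on two vertices is regular because both
degrees are at most `m` and they sum to `2 m`. -/

namespace Real

variable {ι : Type*} {s : Finset ι} {z : ι → ℝ}

lemma prod_rpow_inv_card_pow (hz : ∀ i ∈ s, 0 ≤ z i) :
    (∏ i ∈ s, z i ^ (#s : ℝ)⁻¹) ^ #s = ∏ i ∈ s, z i := by
  rw [← prod_pow]
  exact prod_congr rfl fun i hi => rpow_inv_natCast_pow (hz i hi) (card_ne_zero_of_mem hi)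

lemma prod_le_arith_mean_pow_card (hz : ∀ i ∈ s, 0 ≤ z i) :
    ∏ i ∈ s, z i ≤ ((∑ i ∈ s, z i) / #s) ^ #s := by
  rcases s.eq_empty_or_nonempty with rfl | hs
  · simp
  have hgm := geom_mean_le_arith_mean_weighted s (fun _ => (#s : ℝ)⁻¹) z
    (fun _ _ => by positivity) (by simp [hs.card_ne_zero]) hz
  rw [← mul_sum, inv_mul_eq_div] at hgm
  rw [← prod_rpow_inv_card_pow hz]
  exact pow_le_pow_left₀ (prod_nonneg fun i hi => by have := hz i hi; positivity) hgm _

lemma prod_eq_arith_mean_pow_card_iff (hs : s.Nonempty) (hz : ∀ i ∈ s, 0 ≤ z i) :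
    ∏ i ∈ s, z i = ((∑ i ∈ s, z i) / #s) ^ #s ↔ ∀ j ∈ s, ∀ k ∈ s, z j = z k := by
  rw [← geom_mean_eq_arith_mean_weighted_iff_of_pos s (fun _ => (#s : ℝ)⁻¹) z
    (fun _ _ => by positivity) (by simp [hs.card_ne_zero]) hz, ← mul_sum, inv_mul_eq_div,
    ← prod_rpow_inv_card_pow hz,
    pow_left_inj₀ (prod_nonneg fun i hi => by have := hz i hi; positivity)
      (div_nonneg (sum_nonneg hz) (Nat.cast_nonneg _)) hs.card_ne_zero]

end Real

namespace SimpleGraph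

omit [DecidableEq V] in
lemma isRegularOfDegree_of_card_eq_two (G : SimpleGraph V) [DecidableRel G.Adj]
    (h : Fintype.card V = 2) : G.IsRegularOfDegree #G.edgeFinset := by
  have hsum : ∑ v, G.degree v = ∑ _v : V, #G.edgeFinset := by
    rw [sum_degrees_eq_twice_card_edges, sum_const, card_univ, h, smul_eq_mul]
  intro v
  exact (sum_eq_sum_iff_of_le fun v _ => G.degree_le_card_edgeFinset v).1 hsum v (mem_univ v)

omit [DecidableEq V] in
lemma exists_isRegularOfDegree_iff [Nonempty V] (G : SimpleGraph V) [DecidableRel G.Adj] :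
    (∃ r, G.IsRegularOfDegree r) ↔ ∀ u v, G.degree u = G.degree v :=
  ⟨fun ⟨_, hr⟩ u v => (hr u).trans (hr v).symm,
    fun h => ⟨_, fun v => h v (Classical.arbitrary V)⟩⟩

lemma card_notMem_edge (G : SimpleGraph V) (e : G.edgeSet) :
    Fintype.card {u : V // u ∉ (e : Sym2 V)} = Fintype.card V - 2 := by
  rw [Fintype.card_subtype_compl, Fintype.card_subtype,
    show ({u | u ∈ (e : Sym2 V)} : Finset V) = (e : Sym2 V).toFinset by ext; simp,
    Sym2.card_toFinset_of_not_isDiag _ (G.not_isDiag_of_mem_edgeSet e.2)]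

lemma card_edgeSet_notMem (G : SimpleGraph V) [DecidableRel G.Adj] (v : V) :
    Fintype.card {e : G.edgeSet // v ∉ (e : Sym2 V)} = #G.edgeFinset - G.degree v := by
  rw [Fintype.card_subtype_compl, ← G.card_incidenceSet_eq_degree, G.edgeFinset_card]
  congr 1
  exact Fintype.card_congr (Equiv.subtypeSubtypeEquivSubtypeInter (· ∈ G.edgeSet) (v ∈ ·))

end SimpleGraph

section Gmm

variable (G : SimpleGraph V) [DecidableRel G.Adj]

lemma degree_Gmm_inl (v : V) :
    (Gmm G).degree (Sum.inl v) = Gᶜ.degree v + (#G.edgeFinset - G.degree v) := by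
  classical
  have : (Gmm G).neighborSet (Sum.inl v) ≃
      Gᶜ.neighborSet v ⊕ {e : G.edgeSet // v ∉ (e : Sym2 V)} := Equiv.subtypeSum
  rw [← SimpleGraph.card_neighborSet_eq_degree, Fintype.card_congr this, Fintype.card_sum,
    G.card_edgeSet_notMem, SimpleGraph.card_neighborSet_eq_degree]

lemma degree_Gmm_inr (e : G.edgeSet) : (Gmm G).degree (Sum.inr e) = Fintype.card V - 2 := by
  classical
  have : (Gmm G).neighborSet (Sum.inr e) ≃
      {u : V // u ∉ (e : Sym2 V)} ⊕ {_f : G.edgeSet // False} := Equiv.subtypeSum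
  rw [← SimpleGraph.card_neighborSet_eq_degree, Fintype.card_congr this, Fintype.card_sum,
    G.card_notMem_edge, Fintype.card_eq_zero (α := {_f : G.edgeSet // False}), add_zero]

lemma cast_degree_Gmm_inl (v : V) :
    ((Gmm G).degree (Sum.inl v) : ℝ) =
      Fintype.card V + #G.edgeFinset - 1 - 2 * G.degree v := by
  have hdn : G.degree v + 1 ≤ Fintype.card V := G.degree_lt_card_verts v
  rw [degree_Gmm_inl, SimpleGraph.degree_compl]
  push_cast [Nat.cast_sub (G.degree_le_card_edgeFinset v),
    Nat.cast_sub (by omega : 1 ≤ Fintype.card V),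
    Nat.cast_sub (by omega : G.degree v ≤ Fintype.card V - 1)]
  ring

lemma degree_Gmm_inl_inj {u v : V} :
    (Gmm G).degree (Sum.inl u) = (Gmm G).degree (Sum.inl v) ↔ G.degree u = G.degree v := by
  rw [← Nat.cast_inj (R := ℝ), cast_degree_Gmm_inl, cast_degree_Gmm_inl,
    ← Nat.cast_inj (R := ℝ)]
  constructor <;> intro h <;> linarith

lemma sum_degree_Gmm_inl_div_card [Nonempty V] :
    (∑ v, ((Gmm G).degree (Sum.inl v) : ℝ)) / Fintype.card V =
      Fintype.card V + #G.edgeFinset - 1 - 4 * #G.edgeFinset / Fintype.card V := by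
  have hsum : ∑ v, (G.degree v : ℝ) = 2 * #G.edgeFinset := by
    exact_mod_cast G.sum_degrees_eq_twice_card_edges
  have hn : (Fintype.card V : ℝ) ≠ 0 := Nat.cast_ne_zero.2 Fintype.card_ne_zero
  simp only [cast_degree_Gmm_inl, sum_sub_distrib, sum_const, ← mul_sum, hsum, card_univ,
    nsmul_eq_mul]
  field_simp
  ring

lemma cast_NK_Gmm (hn : 2 ≤ Fintype.card V) :
    (NK (Gmm G) : ℝ) =
      ((Fintype.card V : ℝ) - 2) ^ #G.edgeFinset * ∏ v, ((Gmm G).degree (Sum.inl v) : ℝ) := by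
  rw [NK, Nat.cast_prod, Fintype.prod_sum_type, mul_comm]
  congr 1
  simp [degree_Gmm_inr, Nat.cast_sub hn, G.edgeFinset_card]

end Gmm

theorem stmt_4 (G : SimpleGraph V) [DecidableRel G.Adj]
    (hn : 2 ≤ Fintype.card V) :
    (NK (Gmm G) : ℝ) ≤ ((Fintype.card V : ℝ) - 2) ^ G.edgeFinset.card * (((Fintype.card V : ℝ) + G.edgeFinset.card - 1) - 4 * G.edgeFinset.card / Fintype.card V) ^ Fintype.card V ∧
      ((NK (Gmm G) : ℝ) = ((Fintype.card V : ℝ) - 2) ^ G.edgeFinset.card * (((Fintype.card V : ℝ) + G.edgeFinset.card - 1) - 4 * G.edgeFinset.card / Fintype.card V) ^ Fintype.card V ↔ (∃ r, G.IsRegularOfDegree r)) := by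
  have : Nonempty V := Fintype.card_pos_iff.1 (by omega)
  have hdeg : ∀ v ∈ univ, (0 : ℝ) ≤ (Gmm G).degree (Sum.inl v) :=
    fun _ _ => Nat.cast_nonneg _
  have amgm := Real.prod_le_arith_mean_pow_card hdeg
  have amgm_eq := Real.prod_eq_arith_mean_pow_card_iff univ_nonempty hdeg
  rw [card_univ, sum_degree_Gmm_inl_div_card] at amgm amgm_eq
  rw [cast_NK_Gmm G hn]
  have hn₂ : (0 : ℝ) ≤ Fintype.card V - 2 := sub_nonneg.2 (by exact_mod_cast hn)
  refine ⟨mul_le_mul_of_nonneg_left amgm (pow_nonneg hn₂ _), ?_⟩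
  simp only [mul_eq_mul_left_iff, amgm_eq, mem_univ, forall_const, Nat.cast_inj,
    degree_Gmm_inl_inj, G.exists_isRegularOfDegree_iff]
  refine or_iff_left_of_imp fun hzero u v => ?_
  have hreg := G.isRegularOfDegree_of_card_eq_two
    (by exact_mod_cast sub_eq_zero.1 (pow_eq_zero_iff'.1 hzero).1)
  exact (hreg u).trans (hreg v).symm
end

section
/- Let G be a finite simple graph with n ≥ 1 vertices and m ≥ 1 edges. Then, as real numbers, NK(G^{---}) ≤ ((m+n-1) - 4m/n)^n · ((m+n-1) - M1(G)/m)^m, with equality if and only if G is regular. -/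
open Finset

variable {V : Type*}

variable [Fintype V] [DecidableEq V]

/-- The total transformation graph `G^{---}`. -/
abbrev Gmmm (G : SimpleGraph V) [DecidableRel G.Adj] : SimpleGraph (V ⊕ G.edgeSet) :=
  transGraph G (coAdj G) coshareRel (fun u e => u ∉ e)
    (coAdj_symm G) (coAdj_irrefl G) coshareRel_symm coshareRel_irrefl


/-! In `G^{---}` a vertex `u` has degree `m + n - 1 - 2 d(u)` and an edge `ab` has degree
`m + n - 1 - (d(a) + d(b))`; these sum to `n (m + n - 1) - 4 m` and `m (m + n - 1) - M1(G)`.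
The bound is AM-GM applied separately to the two families of degrees. Equality forces the vertex
degrees to be equal unless the product of the edge degrees vanishes, which cannot happen for an
irregular graph: it has at least three vertices, and an edge is adjacent to all `n - 2` vertices
off it. -/

namespace Real

variable {ι : Type*}

lemma geom_mean_pow_card (s : Finset ι) {z : ι → ℝ} (hz : ∀ i ∈ s, 0 ≤ z i) (hs : s.Nonempty) :
    (∏ i ∈ s, z i ^ (#s : ℝ)⁻¹) ^ #s = ∏ i ∈ s, z i := by
  rw [← prod_pow]
  exact prod_congr rfl fun i hi => rpow_inv_natCast_pow (hz i hi) hs.card_pos.ne'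

lemma sum_inv_card_eq_one {s : Finset ι} (hs : s.Nonempty) : ∑ _i ∈ s, (#s : ℝ)⁻¹ = 1 := by
  rw [sum_const, nsmul_eq_mul, mul_inv_cancel₀ (by exact_mod_cast hs.card_pos.ne')]

lemma sum_inv_card_mul (s : Finset ι) (z : ι → ℝ) :
    ∑ i ∈ s, (#s : ℝ)⁻¹ * z i = (∑ i ∈ s, z i) / #s := by
  rw [← mul_sum, inv_mul_eq_div]

theorem prod_le_arith_mean_pow (s : Finset ι) {z : ι → ℝ} (hz : ∀ i ∈ s, 0 ≤ z i) :
    ∏ i ∈ s, z i ≤ ((∑ i ∈ s, z i) / #s) ^ #s := by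
  rcases s.eq_empty_or_nonempty with rfl | hs
  · simp
  rw [← geom_mean_pow_card s hz hs, ← sum_inv_card_mul]
  refine pow_le_pow_left₀ (prod_nonneg fun i hi => rpow_nonneg (hz i hi) _) ?_ _
  exact geom_mean_le_arith_mean_weighted s _ z (fun _ _ => by positivity)
    (sum_inv_card_eq_one hs) hz

theorem prod_lt_arith_mean_pow_iff (s : Finset ι) {z : ι → ℝ} (hz : ∀ i ∈ s, 0 ≤ z i) :
    ∏ i ∈ s, z i < ((∑ i ∈ s, z i) / #s) ^ #s ↔ ∃ j ∈ s, ∃ k ∈ s, z j ≠ z k := by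
  rcases s.eq_empty_or_nonempty with rfl | hs
  · simp
  rw [← geom_mean_pow_card s hz hs, ← sum_inv_card_mul,
    pow_lt_pow_iff_left₀ (prod_nonneg fun i hi => rpow_nonneg (hz i hi) _)
      (sum_nonneg fun i hi => mul_nonneg (by positivity) (hz i hi)) hs.card_pos.ne']
  exact geom_mean_lt_arith_mean_weighted_iff_of_pos s _ z (fun _ _ => by positivity)
    (sum_inv_card_eq_one hs) hz

theorem prod_eq_arith_mean_pow_iff (s : Finset ι) {z : ι → ℝ} (hz : ∀ i ∈ s, 0 ≤ z i) :
    ∏ i ∈ s, z i = ((∑ i ∈ s, z i) / #s) ^ #s ↔ ∀ j ∈ s, ∀ k ∈ s, z j = z k := by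
  rw [← not_iff_not, ← Ne, ← (prod_le_arith_mean_pow s hz).lt_iff_ne,
    prod_lt_arith_mean_pow_iff s hz]
  push Not
  rfl

end Real

lemma coshareRel_mk_iff {α : Type*} {a b : α} {f : Sym2 α} :
    coshareRel s(a, b) f ↔ a ∉ f ∧ b ∉ f := by
  refine ⟨fun h => ⟨h.2 a (Sym2.mem_mk_left a b), h.2 b (Sym2.mem_mk_right a b)⟩, fun h => ?_⟩
  refine ⟨fun hf => h.1 (hf ▸ Sym2.mem_mk_left a b), fun w hw => ?_⟩
  rcases Sym2.mem_iff.1 hw with rfl | rfl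
  exacts [h.1, h.2]

namespace SimpleGraph

lemma degree_eq_card_inl_add_card_inr {α β : Type*} [Fintype α] [Fintype β]
    (H : SimpleGraph (α ⊕ β)) [DecidableRel H.Adj] (x : α ⊕ β) :
    H.degree x = #{a | H.Adj x (.inl a)} + #{b | H.Adj x (.inr b)} := by
  simp only [← card_neighborFinset_eq_degree, neighborFinset_eq_filter, card_filter,
    Fintype.sum_sum_type]

lemma exists_isRegularOfDegree_iff_s7 {W : Type*} [Fintype W] (H : SimpleGraph W)
    [DecidableRel H.Adj] : (∃ r, H.IsRegularOfDegree r) ↔ ∀ u w, H.degree u = H.degree w := by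
  refine ⟨fun ⟨r, hr⟩ u w => (hr u).trans (hr w).symm, fun h => ?_⟩
  rcases isEmpty_or_nonempty W with hW | ⟨⟨v⟩⟩
  · exact ⟨0, .of_isEmpty⟩
  · exact ⟨_, fun u => h u v⟩

lemma card_filter_edgeSet {W : Type*} (H : SimpleGraph W) [Fintype H.edgeSet]
    (P : Sym2 W → Prop) [DecidablePred P] :
    #{e : H.edgeSet | P e} = #{e ∈ H.edgeFinset | P e} := by
  refine card_bij (fun e _ => e.1) ?_ ?_ ?_ <;> simp +contextual

variable (G : SimpleGraph V) [DecidableRel G.Adj]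

lemma card_filter_notMem_add_degree (v : V) :
    #{e ∈ G.edgeFinset | v ∉ e} + G.degree v = #G.edgeFinset := by
  rw [← card_incidenceFinset_eq_degree, incidenceFinset_eq_filter, add_comm,
    card_filter_add_card_filter_not]

lemma incidenceFinset_inter_incidenceFinset_of_adj {a b : V} (h : G.Adj a b) :
    G.incidenceFinset a ∩ G.incidenceFinset b = {s(a, b)} := by
  apply coe_injective
  push_cast
  exact G.incidenceSet_inter_incidenceSet_of_adj h

lemma card_filter_coshareRel_add_degree_add_degree {a b : V} (h : G.Adj a b) :
    #{f ∈ G.edgeFinset | coshareRel s(a, b) f} + (G.degree a + G.degree b) =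
      #G.edgeFinset + 1 := by
  have hshare : {f ∈ G.edgeFinset | ¬coshareRel s(a, b) f} =
      G.incidenceFinset a ∪ G.incidenceFinset b := by
    ext f
    simp only [mem_filter, coshareRel_mk_iff, mem_union, incidenceFinset_eq_filter]
    tauto
  have hunion := card_union_add_card_inter (G.incidenceFinset a) (G.incidenceFinset b)
  rw [G.incidenceFinset_inter_incidenceFinset_of_adj h, card_singleton,
    card_incidenceFinset_eq_degree, card_incidenceFinset_eq_degree, ← hshare] at hunion
  have hsplit := card_filter_add_card_filter_not (s := G.edgeFinset)
    (fun f => coshareRel s(a, b) f)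
  omega

lemma Gmmm_degree_inl (u : V) :
    (Gmmm G).degree (.inl u) + 2 * G.degree u + 1 = #G.edgeFinset + Fintype.card V := by
  have hvert : #{v | (Gmmm G).Adj (.inl u) (.inl v)} = Gᶜ.degree u := by
    rw [← card_neighborFinset_eq_degree, neighborFinset_eq_filter]
    rfl
  have hedge : #{f : G.edgeSet | (Gmmm G).Adj (.inl u) (.inr f)} =
      #{e ∈ G.edgeFinset | u ∉ e} :=
    G.card_filter_edgeSet (u ∉ ·)
  have := G.card_filter_notMem_add_degree u
  have := G.degree_lt_card_verts u
  rw [degree_eq_card_inl_add_card_inr, hvert, hedge, degree_compl]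
  omega

lemma card_Gmmm_adj_inr_inl (e : G.edgeSet) :
    #{v | (Gmmm G).Adj (.inr e) (.inl v)} + 2 = Fintype.card V := by
  have hcompl : ({v | (Gmmm G).Adj (.inr e) (.inl v)} : Finset V) = (e : Sym2 V).toFinsetᶜ := by
    ext
    simp only [mem_filter, mem_univ, true_and, mem_compl, Sym2.mem_toFinset]
    rfl
  have hcard := Sym2.card_toFinset_of_not_isDiag _ (G.not_isDiag_of_mem_edgeSet e.2)
  have := card_le_univ (e : Sym2 V).toFinset
  rw [hcompl, card_compl]
  omega

lemma card_le_Gmmm_degree_inr_add_two (e : G.edgeSet) :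
    Fintype.card V ≤ (Gmmm G).degree (.inr e) + 2 := by
  rw [degree_eq_card_inl_add_card_inr, ← G.card_Gmmm_adj_inr_inl e]
  omega

lemma Gmmm_degree_inr (e : G.edgeSet) :
    (Gmmm G).degree (.inr e) + ∑ v ∈ (e : Sym2 V).toFinset, G.degree v + 1 =
      #G.edgeFinset + Fintype.card V := by
  have hvert := G.card_Gmmm_adj_inr_inl e
  obtain ⟨e, he⟩ := e
  induction e using Sym2.ind with | _ a b => ?_
  have hab : G.Adj a b := he
  have hedge : #{f : G.edgeSet | (Gmmm G).Adj (.inr ⟨s(a, b), he⟩) (.inr f)} =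
      #{f ∈ G.edgeFinset | coshareRel s(a, b) f} :=
    G.card_filter_edgeSet (coshareRel s(a, b))
  have := G.card_filter_coshareRel_add_degree_add_degree hab
  rw [degree_eq_card_inl_add_card_inr, hedge, Sym2.toFinset_mk_eq, sum_pair hab.ne]
  omega

lemma sum_edgeFinset_sum_degree_eq_M1 :
    ∑ e ∈ G.edgeFinset, ∑ v ∈ e.toFinset, G.degree v = M1 G := by
  rw [sum_comm' (t' := univ) (s' := fun v => G.incidenceFinset v) (by simp [incidenceSet])]
  simp [M1, sq]

lemma three_le_card_of_degree_lt {u w : V} (h : G.degree u < G.degree w) :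
    3 ≤ Fintype.card V := by
  by_contra! hV
  have hw : G.degree w < 2 := (G.degree_lt_card_verts w).trans_le (by omega)
  obtain ⟨z, hwz⟩ := G.degree_pos_iff_exists_adj w |>.1 (by omega)
  have hu : G.degree u = 0 := by omega
  have huz : u ≠ z := fun huz => by
    have := G.degree_pos_iff_exists_adj u |>.2 ⟨w, huz ▸ hwz.symm⟩
    omega
  have huw : u ≠ w := by rintro rfl; omega
  have := card_le_univ ({u, w, z} : Finset V)
  rw [card_insert_of_notMem (by simp [huw, huz]), card_pair hwz.ne] at this
  omega

lemma Gmmm_degree_inl_eq_iff (u w : V) :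
    (Gmmm G).degree (.inl u) = (Gmmm G).degree (.inl w) ↔ G.degree u = G.degree w := by
  have := G.Gmmm_degree_inl u
  have := G.Gmmm_degree_inl w
  omega

lemma Gmmm_degree_inr_eq_of_isRegularOfDegree {r : ℕ} (h : G.IsRegularOfDegree r)
    (e f : G.edgeSet) : (Gmmm G).degree (.inr e) = (Gmmm G).degree (.inr f) := by
  have hsum (e : G.edgeSet) : ∑ v ∈ (e : Sym2 V).toFinset, G.degree v = 2 * r := by
    rw [sum_congr rfl fun v _ => h v, sum_const, smul_eq_mul,
      Sym2.card_toFinset_of_not_isDiag _ (G.not_isDiag_of_mem_edgeSet e.2)]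
  have := G.Gmmm_degree_inr e
  have := G.Gmmm_degree_inr f
  rw [hsum] at *
  omega

lemma cast_Gmmm_degree_inl (u : V) :
    ((Gmmm G).degree (.inl u) : ℝ) = #G.edgeFinset + Fintype.card V - 1 - 2 * G.degree u := by
  have := congrArg (Nat.cast (R := ℝ)) (G.Gmmm_degree_inl u)
  push_cast at this
  linarith

lemma cast_Gmmm_degree_inr (e : G.edgeSet) :
    ((Gmmm G).degree (.inr e) : ℝ) =
      #G.edgeFinset + Fintype.card V - 1 - ∑ v ∈ (e : Sym2 V).toFinset, (G.degree v : ℝ) := by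
  have := congrArg (Nat.cast (R := ℝ)) (G.Gmmm_degree_inr e)
  push_cast at this
  linarith

lemma sum_Gmmm_degree_inl :
    ∑ u, ((Gmmm G).degree (.inl u) : ℝ) =
      Fintype.card V * (#G.edgeFinset + Fintype.card V - 1) - 4 * #G.edgeFinset := by
  have := congrArg (Nat.cast (R := ℝ)) G.sum_degrees_eq_twice_card_edges
  push_cast at this
  simp only [cast_Gmmm_degree_inl, sum_sub_distrib, ← mul_sum, this, sum_const, card_univ,
    nsmul_eq_mul]
  ring

lemma sum_Gmmm_degree_inr :
    ∑ e : G.edgeSet, ((Gmmm G).degree (.inr e) : ℝ) =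
      #G.edgeFinset * (#G.edgeFinset + Fintype.card V - 1) - M1 G := by
  have := congrArg (Nat.cast (R := ℝ)) G.sum_edgeFinset_sum_degree_eq_M1
  push_cast at this
  simp only [cast_Gmmm_degree_inr, sum_sub_distrib, sum_const, edgeSet_univ_card, nsmul_eq_mul]
  rw [sum_set_coe (s := G.edgeSet) (f := fun e => ∑ v ∈ e.toFinset, (G.degree v : ℝ))]
  change _ - ∑ e ∈ G.edgeFinset, _ = _
  rw [this]
  ring

lemma NK_Gmmm_eq :
    (NK (Gmmm G) : ℝ) =
      (∏ u, ((Gmmm G).degree (.inl u) : ℝ)) * ∏ e : G.edgeSet, ((Gmmm G).degree (.inr e) : ℝ) := by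
  rw [NK, Nat.cast_prod, Fintype.prod_sum_type]

lemma mean_Gmmm_degree_inl (hn : Fintype.card V ≠ 0) :
    (∑ u, ((Gmmm G).degree (.inl u) : ℝ)) / #(univ : Finset V) =
      #G.edgeFinset + Fintype.card V - 1 - 4 * #G.edgeFinset / Fintype.card V := by
  rw [sum_Gmmm_degree_inl, card_univ]
  field_simp

lemma mean_Gmmm_degree_inr (hm : #G.edgeFinset ≠ 0) :
    (∑ e : G.edgeSet, ((Gmmm G).degree (.inr e) : ℝ)) / #(univ : Finset G.edgeSet) =
      #G.edgeFinset + Fintype.card V - 1 - M1 G / #G.edgeFinset := by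
  rw [sum_Gmmm_degree_inr, edgeSet_univ_card]
  field_simp

lemma prod_Gmmm_degree_inl_le (hn : Fintype.card V ≠ 0) :
    ∏ u, ((Gmmm G).degree (.inl u) : ℝ) ≤
      (#G.edgeFinset + Fintype.card V - 1 - 4 * #G.edgeFinset / Fintype.card V) ^
        Fintype.card V := by
  rw [← mean_Gmmm_degree_inl G hn, ← card_univ]
  exact Real.prod_le_arith_mean_pow univ fun _ _ => Nat.cast_nonneg _

lemma prod_Gmmm_degree_inl_eq_iff (hn : Fintype.card V ≠ 0) :
    ∏ u, ((Gmmm G).degree (.inl u) : ℝ) =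
        (#G.edgeFinset + Fintype.card V - 1 - 4 * #G.edgeFinset / Fintype.card V) ^
          Fintype.card V ↔
      ∀ u w, G.degree u = G.degree w := by
  rw [← mean_Gmmm_degree_inl G hn, ← card_univ,
    Real.prod_eq_arith_mean_pow_iff univ fun _ _ => Nat.cast_nonneg _]
  simp only [mem_univ, forall_const, Nat.cast_inj, Gmmm_degree_inl_eq_iff]

lemma prod_Gmmm_degree_inr_le (hm : #G.edgeFinset ≠ 0) :
    ∏ e : G.edgeSet, ((Gmmm G).degree (.inr e) : ℝ) ≤
      (#G.edgeFinset + Fintype.card V - 1 - M1 G / #G.edgeFinset) ^ #G.edgeFinset := by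
  rw [← mean_Gmmm_degree_inr G hm, ← edgeSet_univ_card]
  exact Real.prod_le_arith_mean_pow univ fun _ _ => Nat.cast_nonneg _

lemma prod_Gmmm_degree_inr_eq_of_isRegularOfDegree (hm : #G.edgeFinset ≠ 0) {r : ℕ}
    (h : G.IsRegularOfDegree r) :
    ∏ e : G.edgeSet, ((Gmmm G).degree (.inr e) : ℝ) =
      (#G.edgeFinset + Fintype.card V - 1 - M1 G / #G.edgeFinset) ^ #G.edgeFinset := by
  have := (Real.prod_eq_arith_mean_pow_iff univ fun e _ => Nat.cast_nonneg _).2 fun e _ f _ =>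
    congrArg Nat.cast (G.Gmmm_degree_inr_eq_of_isRegularOfDegree h e f)
  rwa [mean_Gmmm_degree_inr G hm, edgeSet_univ_card] at this

lemma prod_Gmmm_degree_inr_pos (hV : 3 ≤ Fintype.card V) :
    0 < ∏ e : G.edgeSet, ((Gmmm G).degree (.inr e) : ℝ) :=
  prod_pos fun e _ => Nat.cast_pos.2 (by have := G.card_le_Gmmm_degree_inr_add_two e; omega)

end SimpleGraph

theorem stmt_7 (G : SimpleGraph V) [DecidableRel G.Adj]
    (hn : 1 ≤ Fintype.card V)
    (hm : 1 ≤ G.edgeFinset.card) :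
    (NK (Gmmm G) : ℝ) ≤ (((G.edgeFinset.card : ℝ) + Fintype.card V - 1) - 4 * G.edgeFinset.card / Fintype.card V) ^ Fintype.card V * (((G.edgeFinset.card : ℝ) + Fintype.card V - 1) - (M1 G : ℝ) / G.edgeFinset.card) ^ G.edgeFinset.card ∧
      ((NK (Gmmm G) : ℝ) = (((G.edgeFinset.card : ℝ) + Fintype.card V - 1) - 4 * G.edgeFinset.card / Fintype.card V) ^ Fintype.card V * (((G.edgeFinset.card : ℝ) + Fintype.card V - 1) - (M1 G : ℝ) / G.edgeFinset.card) ^ G.edgeFinset.card ↔ (∃ r, G.IsRegularOfDegree r)) := by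
  have hX := G.prod_Gmmm_degree_inl_le (by omega)
  have hY := G.prod_Gmmm_degree_inr_le (by omega)
  have hX0 : 0 ≤ ∏ u, ((Gmmm G).degree (.inl u) : ℝ) := prod_nonneg fun _ _ => Nat.cast_nonneg _
  rw [G.NK_Gmmm_eq]
  refine ⟨mul_le_mul hX hY (prod_nonneg fun _ _ => Nat.cast_nonneg _) (hX0.trans hX),
    fun heq => G.exists_isRegularOfDegree_iff_s7.2 fun u w => ?_, fun ⟨r, hr⟩ => ?_⟩
  · by_contra huw
    have hV := (lt_or_gt_of_ne huw).elim G.three_le_card_of_degree_lt G.three_le_card_of_degree_lt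
    have hXlt := hX.lt_of_ne fun h => huw ((G.prod_Gmmm_degree_inl_eq_iff (by omega)).1 h u w)
    exact (mul_lt_mul hXlt hY (G.prod_Gmmm_degree_inr_pos hV) (hX0.trans hX)).ne heq
  · rw [(G.prod_Gmmm_degree_inl_eq_iff (by omega)).2 fun u w => (hr u).trans (hr w).symm,
      G.prod_Gmmm_degree_inr_eq_of_isRegularOfDegree (by omega) hr]
end

section
/- Let G be an r-regular finite simple graph with n vertices and m edges. Then NK(G^{--+}) = (n-1)^n · (m+3-2r)^m. -/
open Finset

variable {V : Type*}

variable [Fintype V] [DecidableEq V]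

/-- The total transformation graph `G^{--+}`. -/
abbrev Gmmp (G : SimpleGraph V) [DecidableRel G.Adj] : SimpleGraph (V ⊕ G.edgeSet) :=
  transGraph G (coAdj G) coshareRel (fun u e => u ∈ e)
    (coAdj_symm G) (coAdj_irrefl G) coshareRel_symm coshareRel_irrefl

namespace SimpleGraph

section transGraph

variable (G : SimpleGraph V) [Fintype G.edgeSet]
  {Rvv : V → V → Prop} {Ree : Sym2 V → Sym2 V → Prop} {Rve : V → Sym2 V → Prop}
  [DecidableRel Rvv] [DecidableRel Ree] [∀ u e, Decidable (Rve u e)]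
  (hvv : Symmetric Rvv) (hvv' : Irreflexive Rvv) (hee : Symmetric Ree) (hee' : Irreflexive Ree)

omit [DecidableEq V] in
lemma degree_transGraph_inl (u : V) :
    (transGraph G Rvv Ree Rve hvv hvv' hee hee').degree (Sum.inl u)
      = Fintype.card {v // Rvv u v} + Fintype.card {e : G.edgeSet // Rve u e} := by
  rw [← card_neighborSet_eq_degree, ← Fintype.card_sum]
  exact Fintype.card_congr Equiv.subtypeSum

omit [DecidableEq V] in
lemma degree_transGraph_inr (e : G.edgeSet) :
    (transGraph G Rvv Ree Rve hvv hvv' hee hee').degree (Sum.inr e)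
      = Fintype.card {u // Rve u e} + Fintype.card {f : G.edgeSet // Ree e f} := by
  rw [← card_neighborSet_eq_degree, ← Fintype.card_sum]
  exact Fintype.card_congr Equiv.subtypeSum

end transGraph

variable (G : SimpleGraph V) [DecidableRel G.Adj]

omit [DecidableEq V] in
lemma card_edgeSet_subtype (p : Sym2 V → Prop) [DecidablePred p] :
    Fintype.card {e : G.edgeSet // p e} = #{e ∈ G.edgeFinset | p e} := by
  rw [Fintype.card_congr (Equiv.subtypeSubtypeEquivSubtypeInter (· ∈ G.edgeSet) p),
    Fintype.card_subtype]
  congr 1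
  ext e
  simp

lemma card_coAdj (u : V) :
    Fintype.card {v // coAdj G u v} = Fintype.card V - 1 - G.degree u := by
  have h : ({v | coAdj G u v} : Finset V) = univ \ insert u (G.neighborFinset u) := by
    ext v
    simp [coAdj, eq_comm]
  rw [Fintype.card_subtype, h, card_sdiff_of_subset (subset_univ _),
    card_insert_of_notMem (by simp), card_univ, card_neighborFinset_eq_degree]
  omega

lemma degree_Gmmp_inl (u : V) : (Gmmp G).degree (Sum.inl u) = Fintype.card V - 1 := by
  rw [degree_transGraph_inl, card_coAdj, card_edgeSet_subtype G (u ∈ ·),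
    ← incidenceFinset_eq_filter, card_incidenceFinset_eq_degree]
  have := G.degree_lt_card_verts u
  omega

lemma card_incidenceFinset_union_of_adj {a b : V} (hab : G.Adj a b) :
    #(G.incidenceFinset a ∪ G.incidenceFinset b) = G.degree a + G.degree b - 1 := by
  have hinter : G.incidenceFinset a ∩ G.incidenceFinset b = {s(a, b)} := by
    rw [← coe_inj, coe_inter, coe_incidenceFinset, coe_incidenceFinset,
      incidenceSet_inter_incidenceSet_of_adj G hab, coe_singleton]
  have := card_union_add_card_inter (G.incidenceFinset a) (G.incidenceFinset b)
  rw [hinter, card_singleton, card_incidenceFinset_eq_degree,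
    card_incidenceFinset_eq_degree] at this
  omega

lemma card_coshareRel_of_adj {a b : V} (hab : G.Adj a b) :
    Fintype.card {f : G.edgeSet // coshareRel s(a, b) f}
      = #G.edgeFinset - (G.degree a + G.degree b - 1) := by
  have h : ({f ∈ G.edgeFinset | coshareRel s(a, b) f} : Finset (Sym2 V))
      = G.edgeFinset \ (G.incidenceFinset a ∪ G.incidenceFinset b) := by
    ext f
    simp only [mem_filter, mem_sdiff, mem_union, mem_incidenceFinset, incidenceSet,
      Set.mem_setOf_eq, mem_edgeFinset, coshareRel, Sym2.mem_iff, forall_eq_or_imp, forall_eq]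
    constructor
    · rintro ⟨hf, -, ha, hb⟩
      tauto
    · rintro ⟨hf, h⟩
      refine ⟨hf, ?_, fun ha => h (Or.inl ⟨hf, ha⟩), fun hb => h (Or.inr ⟨hf, hb⟩)⟩
      rintro rfl
      exact h (Or.inl ⟨hf, Sym2.mem_mk_left a b⟩)
  rw [card_edgeSet_subtype G (coshareRel s(a, b)), h,
    card_sdiff_of_subset (union_subset (G.incidenceFinset_subset a) (G.incidenceFinset_subset b)),
    card_incidenceFinset_union_of_adj G hab]

lemma degree_Gmmp_inr {a b : V} (hab : G.Adj a b) :
    (Gmmp G).degree (Sum.inr ⟨s(a, b), hab⟩)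
      = #G.edgeFinset + 3 - (G.degree a + G.degree b) := by
  have h_ends : Fintype.card {u // u ∈ s(a, b)} = 2 := by
    have : ({u | u ∈ s(a, b)} : Finset V) = {a, b} := by ext; simp
    rw [Fintype.card_subtype, this, card_pair hab.ne]
  have h_union := card_le_card
    (union_subset (G.incidenceFinset_subset a) (G.incidenceFinset_subset b))
  have h_deg : 0 < G.degree a := (G.degree_pos_iff_exists_adj a).2 ⟨b, hab⟩
  rw [card_incidenceFinset_union_of_adj G hab] at h_union
  rw [degree_transGraph_inr, h_ends, card_coshareRel_of_adj G hab]
  omega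

end SimpleGraph

theorem stmt_12 (G : SimpleGraph V) [DecidableRel G.Adj]
    (r : ℕ)
    (hreg : G.IsRegularOfDegree r) :
    NK (Gmmp G) = (Fintype.card V - 1) ^ Fintype.card V * (G.edgeFinset.card + 3 - 2 * r) ^ G.edgeFinset.card := by
  have h_edge (e : G.edgeSet) : (Gmmp G).degree (Sum.inr e) = #G.edgeFinset + 3 - 2 * r := by
    obtain ⟨e, he⟩ := e
    induction e using Sym2.ind with
    | _ a b => rw [G.degree_Gmmp_inr he, hreg a, hreg b, two_mul]
  rw [NK, Fintype.prod_sum_type]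
  simp only [G.degree_Gmmp_inl, h_edge, prod_const, card_univ, G.edgeFinset_card]
end

section
/- Let G be a finite simple graph with n vertices and m ≥ 1 edges. Then, as real numbers, NK(G^{+-+}) ≤ 2^n · NK(G) · ((m+3) - M1(G)/m)^m; moreover, equality holds if G is regular. -/
/-!
In `G^{+-+}` a vertex `u` is joined to its `d(u)` neighbours and its `d(u)` incident edges, and an
edge `ab` to its two ends and to the `m + 1 - d(a) - d(b)` edges meeting neither `a` nor `b`. Hence
`NK(G^{+-+}) = 2^n NK(G) ∏_{ab} (m + 3 - (d(a) + d(b)))`. Since `∑_{ab} (d(a) + d(b)) = M1(G)`,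
AM-GM bounds the product by `(m + 3 - M1(G)/m)^m`, with equality when all factors coincide, as they
do for a regular graph.
-/

open Finset

variable {V : Type*}

variable [Fintype V] [DecidableEq V]

/-- The total transformation graph `G^{+-+}`. -/
abbrev Gpmp (G : SimpleGraph V) [DecidableRel G.Adj] : SimpleGraph (V ⊕ G.edgeSet) :=
  transGraph G G.Adj coshareRel (fun u e => u ∈ e)
    (@id (Symmetric G.Adj) (fun _ _ h => h.symm)) (@id (Irreflexive G.Adj) (fun _ => G.irrefl)) coshareRel_symm coshareRel_irrefl


theorem Real.prod_le_pow_sum_div_card {ι : Type*} (s : Finset ι) (z : ι → ℝ)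
    (hz : ∀ i ∈ s, 0 ≤ z i) : ∏ i ∈ s, z i ≤ ((∑ i ∈ s, z i) / #s) ^ #s := by
  rcases s.eq_empty_or_nonempty with rfl | hs
  · simp
  have hcard : (0 : ℝ) < #s := by exact_mod_cast hs.card_pos
  have hprod : 0 ≤ ∏ i ∈ s, z i := prod_nonneg hz
  have amgm := Real.geom_mean_le_arith_mean s (fun _ => 1) z (fun _ _ => zero_le_one)
    (by simpa using hcard) hz
  simp only [Real.rpow_one, one_mul, sum_const, nsmul_eq_mul, mul_one] at amgm
  calc ∏ i ∈ s, z i = ((∏ i ∈ s, z i) ^ (#s : ℝ)⁻¹) ^ #s := by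
        rw [← Real.rpow_natCast, ← Real.rpow_mul hprod, inv_mul_cancel₀ hcard.ne', Real.rpow_one]
    _ ≤ _ := pow_le_pow_left₀ (Real.rpow_nonneg hprod _) amgm _

theorem Real.prod_sub_le_pow_sub_sum_div_card {ι : Type*} (s : Finset ι) (c : ℝ) (x : ι → ℝ)
    (hx : ∀ i ∈ s, x i ≤ c) :
    ∏ i ∈ s, (c - x i) ≤ (c - (∑ i ∈ s, x i) / #s) ^ #s := by
  rcases s.eq_empty_or_nonempty with rfl | hs
  · simp
  have hmean : (∑ i ∈ s, (c - x i)) / #s = c - (∑ i ∈ s, x i) / #s := by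
    have : (#s : ℝ) ≠ 0 := by exact_mod_cast hs.card_pos.ne'
    rw [sum_sub_distrib, sum_const, nsmul_eq_mul]
    field_simp
  rw [← hmean]
  exact Real.prod_le_pow_sum_div_card s _ fun i hi => sub_nonneg.2 (hx i hi)

theorem prod_sub_eq_pow_sub_sum_div_card_of_forall_eq {ι K : Type*} [Field K] [CharZero K]
    (s : Finset ι) (c a : K) (x : ι → K)
    (hx : ∀ i ∈ s, x i = a) :
    ∏ i ∈ s, (c - x i) = (c - (∑ i ∈ s, x i) / #s) ^ #s := by
  rcases s.eq_empty_or_nonempty with rfl | hs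
  · simp
  have : (#s : K) ≠ 0 := by exact_mod_cast hs.card_pos.ne'
  rw [prod_congr rfl fun i hi => by rw [hx i hi], sum_congr rfl hx, prod_const, sum_const,
    nsmul_eq_mul, mul_div_cancel_left₀ _ this]

namespace SimpleGraph

variable {V : Type*} [Fintype V] (G : SimpleGraph V) [DecidableRel G.Adj]

theorem card_filter_edgeSet_s16 (p : Sym2 V → Prop) [DecidablePred p] :
    #{e : G.edgeSet | p e} = #{e ∈ G.edgeFinset | p e} := by
  rw [← card_map (Function.Embedding.subtype _)]
  congr 1
  ext e
  simp [and_comm]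

variable [DecidableEq V]

theorem sum_edgeFinset_add_map {M : Type*} [AddCommMonoid M] (f : V → M) :
    ∑ e ∈ G.edgeFinset, (e.map f).add = ∑ v, G.degree v • f v := by
  have hpair : ∀ e ∈ G.edgeFinset, (e.map f).add = ∑ v ∈ e.toFinset, f v := by
    intro e he
    induction e using Sym2.ind with
    | _ a b =>
      rw [Sym2.map_mk, Sym2.add_mk, Sym2.toFinset_mk_eq,
        sum_pair (G.ne_of_adj (mem_edgeFinset.1 he))]
  rw [sum_congr rfl hpair, sum_comm' (s' := fun v => G.incidenceFinset v) (t' := univ)]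
  · simp only [sum_const, card_incidenceFinset_eq_degree]
  · intro e v
    simp [incidenceFinset_eq_filter, and_comm]

theorem sum_edgeFinset_add_map_degree :
    ∑ e ∈ G.edgeFinset, (e.map fun v => G.degree v).add = ∑ v, G.degree v ^ 2 := by
  simp only [sum_edgeFinset_add_map, smul_eq_mul, sq]

theorem card_incidenceFinset_union_add_one {a b : V} (hab : G.Adj a b) :
    #(G.incidenceFinset a ∪ G.incidenceFinset b) + 1 = G.degree a + G.degree b := by
  have hinter : G.incidenceFinset a ∩ G.incidenceFinset b = {s(a, b)} := by
    rw [← coe_inj, coe_inter, coe_incidenceFinset, coe_incidenceFinset,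
      G.incidenceSet_inter_incidenceSet_of_adj hab, coe_singleton]
  rw [← card_incidenceFinset_eq_degree, ← card_incidenceFinset_eq_degree,
    ← card_union_add_card_inter, hinter, card_singleton]

end SimpleGraph

section transGraph

variable {V : Type*} [Fintype V] {G : SimpleGraph V} [DecidableRel G.Adj]
  {Rvv : V → V → Prop} {Ree : Sym2 V → Sym2 V → Prop} {Rve : V → Sym2 V → Prop}
  {hvv : Symmetric Rvv} {hvv' : Irreflexive Rvv} {hee : Symmetric Ree} {hee' : Irreflexive Ree}
  [DecidableRel Rvv] [DecidableRel Ree] [∀ u e, Decidable (Rve u e)]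

theorem degree_transGraph_inl (u : V) :
    (transGraph G Rvv Ree Rve hvv hvv' hee hee').degree (.inl u) =
      #{v | Rvv u v} + #{e : G.edgeSet | Rve u e} := by
  rw [← SimpleGraph.card_neighborSet_eq_degree, Fintype.card_congr Equiv.subtypeSum,
    Fintype.card_sum, Fintype.card_subtype, Fintype.card_subtype]
  rfl

theorem degree_transGraph_inr (e : G.edgeSet) :
    (transGraph G Rvv Ree Rve hvv hvv' hee hee').degree (.inr e) =
      #{u | Rve u e} + #{f : G.edgeSet | Ree e f} := by
  rw [← SimpleGraph.card_neighborSet_eq_degree, Fintype.card_congr Equiv.subtypeSum,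
    Fintype.card_sum, Fintype.card_subtype, Fintype.card_subtype]
  rfl

end transGraph

theorem not_coshareRel_mk_iff {W : Type*} {a b : W} {f : Sym2 W} :
    ¬ coshareRel s(a, b) f ↔ a ∈ f ∨ b ∈ f := by
  by_cases hf : s(a, b) = f
  · subst hf
    simp
  · simp only [coshareRel, ne_eq, hf, not_false_eq_true, true_and, Sym2.mem_iff,
      forall_eq_or_imp, forall_eq, not_and_or, not_not]

section Gpmp

variable {V : Type*} [Fintype V] [DecidableEq V] (G : SimpleGraph V) [DecidableRel G.Adj]

theorem filter_not_coshareRel_mk {a b : V} :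
    {f ∈ G.edgeFinset | ¬ coshareRel s(a, b) f} = G.incidenceFinset a ∪ G.incidenceFinset b := by
  simp only [not_coshareRel_mk_iff, filter_or, G.incidenceFinset_eq_filter]

theorem degree_Gpmp_inl (u : V) : (Gpmp G).degree (.inl u) = 2 * G.degree u := by
  rw [degree_transGraph_inl, G.card_filter_edgeSet_s16 (u ∈ ·), ← G.incidenceFinset_eq_filter,
    G.card_incidenceFinset_eq_degree, ← G.neighborFinset_eq_filter,
    G.card_neighborFinset_eq_degree, two_mul]

-- The edges meeting `a` or `b` number `d(a) + d(b) - 1`, since `ab` itself is counted twice.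
theorem degree_Gpmp_inr_add (e : G.edgeSet) :
    (Gpmp G).degree (.inr e) + (e.1.map fun v => G.degree v).add = #G.edgeFinset + 3 := by
  obtain ⟨e, he⟩ := e
  induction e using Sym2.ind with
  | _ a b =>
  have hab : G.Adj a b := he
  have hends : #{u | u ∈ s(a, b)} = 2 := by
    rw [show ({u | u ∈ s(a, b)} : Finset V) = {a, b} by ext; simp, card_pair hab.ne]
  have hsplit := card_filter_add_card_filter_not (s := G.edgeFinset) (coshareRel s(a, b))
  rw [filter_not_coshareRel_mk] at hsplit
  have hmeet := G.card_incidenceFinset_union_add_one hab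
  rw [degree_transGraph_inr, G.card_filter_edgeSet_s16 (coshareRel s(a, b)), hends, Sym2.map_mk,
    Sym2.add_mk]
  linarith

theorem cast_degree_Gpmp_inr (e : G.edgeSet) :
    ((Gpmp G).degree (.inr e) : ℝ) = #G.edgeFinset + 3 - (e.1.map fun v => G.degree v).add := by
  rw [eq_sub_iff_add_eq]
  exact_mod_cast degree_Gpmp_inr_add G e

theorem cast_NK_Gpmp :
    (NK (Gpmp G) : ℝ) = 2 ^ Fintype.card V * NK G *
      ∏ e ∈ G.edgeFinset, ((#G.edgeFinset : ℝ) + 3 - (e.map fun v => G.degree v).add) := by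
  simp only [NK, Nat.cast_prod, Fintype.prod_sum_type, degree_Gpmp_inl, cast_degree_Gpmp_inr,
    Nat.cast_mul, Nat.cast_pow, Nat.cast_ofNat, prod_mul_distrib, prod_const, card_univ,
    mul_assoc]
  rw [prod_subtype G.edgeFinset (p := (· ∈ G.edgeSet)) fun _ => G.mem_edgeFinset]

end Gpmp

theorem stmt_16_general (G : SimpleGraph V) [DecidableRel G.Adj] :
    (NK (Gpmp G) : ℝ) ≤ 2 ^ Fintype.card V * (NK G : ℝ) * (((G.edgeFinset.card : ℝ) + 3) - (M1 G : ℝ) / G.edgeFinset.card) ^ G.edgeFinset.card ∧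
      ((∃ r, G.IsRegularOfDegree r) → (NK (Gpmp G) : ℝ) = 2 ^ Fintype.card V * (NK G : ℝ) * (((G.edgeFinset.card : ℝ) + 3) - (M1 G : ℝ) / G.edgeFinset.card) ^ G.edgeFinset.card) := by
  have hM1 : (M1 G : ℝ) = ∑ e ∈ G.edgeFinset, ((e.map fun v => G.degree v).add : ℝ) := by
    rw [M1, ← G.sum_edgeFinset_add_map_degree, Nat.cast_sum]
  rw [cast_NK_Gpmp, hM1]
  constructor
  · refine mul_le_mul_of_nonneg_left (Real.prod_sub_le_pow_sub_sum_div_card _ _ _ ?_)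
      (by positivity)
    intro e he
    have := degree_Gpmp_inr_add G ⟨e, G.mem_edgeFinset.1 he⟩
    exact_mod_cast (Nat.le_add_left _ _).trans this.le
  · rintro ⟨r, hr⟩
    congr 1
    refine prod_sub_eq_pow_sub_sum_div_card_of_forall_eq _ _ (2 * r : ℝ) _ fun e _ => ?_
    induction e using Sym2.ind with
    | _ a b => simp [hr.degree_eq, two_mul]

theorem stmt_16 (G : SimpleGraph V) [DecidableRel G.Adj]
    (hm : 1 ≤ G.edgeFinset.card) :
    (NK (Gpmp G) : ℝ) ≤ 2 ^ Fintype.card V * (NK G : ℝ) * (((G.edgeFinset.card : ℝ) + 3) - (M1 G : ℝ) / G.edgeFinset.card) ^ G.edgeFinset.card ∧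
      ((∃ r, G.IsRegularOfDegree r) → (NK (Gpmp G) : ℝ) = 2 ^ Fintype.card V * (NK G : ℝ) * (((G.edgeFinset.card : ℝ) + 3) - (M1 G : ℝ) / G.edgeFinset.card) ^ G.edgeFinset.card) :=
  stmt_16_general G
end
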